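/- Let P, P_G, P_C be probability distributions on a finite set and define the GAN objective L(D) = E_{ω~P} D(ω) - (1/2) E_{ω~P_G} D(ω) - (1/2) E_{ω~P_C} D(ω) over functions D: Ω → [-1,1]. Then min over (P_G, P_C) of max_D L(D) equals 0 and is achieved exactly when P = (P_G + P_C)/2. -/

import Mathlib

/-!
The objective is linear in `D` with coefficients `Q = P - (P_G + P_C)/2`, so its supremum over
`|D| ≤ 1` is the `ℓ¹` norm `∑ |Q ω|`, attained at `D = sign Q`. An `ℓ¹` norm is nonnegative and
vanishes exactly when `Q = 0`.
-/

open Finset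

lemma isGreatest_sum_mul_of_abs_le_one {Ω : Type*} [Fintype Ω] (Q : Ω → ℝ) :
    IsGreatest {v : ℝ | ∃ D : Ω → ℝ, (∀ ω, |D ω| ≤ 1) ∧ v = ∑ ω, Q ω * D ω} (∑ ω, |Q ω|) := by
  refine ⟨⟨fun ω => SignType.sign (Q ω), fun ω => ?_, by simp only [self_mul_sign]⟩, ?_⟩
  · beta_reduce
    generalize SignType.sign (Q ω) = s
    cases s <;> simp
  · rintro v ⟨D, hD, rfl⟩
    refine sum_le_sum fun ω _ => ?_
    calc Q ω * D ω ≤ |Q ω| * |D ω| := abs_mul (Q ω) (D ω) ▸ le_abs_self _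
      _ ≤ |Q ω| := mul_le_of_le_one_right (abs_nonneg _) (hD ω)

lemma sSup_sum_mul_of_abs_le_one {Ω : Type*} [Fintype Ω] (Q : Ω → ℝ) :
    sSup {v : ℝ | ∃ D : Ω → ℝ, (∀ ω, |D ω| ≤ 1) ∧ v = ∑ ω, Q ω * D ω} = ∑ ω, |Q ω| :=
  (isGreatest_sum_mul_of_abs_le_one Q).csSup_eq

lemma sum_mul_sub_half_sum_mul_sub_half_sum_mul {Ω : Type*} [Fintype Ω] (P PG PC D : Ω → ℝ) :
    (∑ ω, P ω * D ω) - (1/2) * (∑ ω, PG ω * D ω) - (1/2) * (∑ ω, PC ω * D ω)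
      = ∑ ω, (P ω - (PG ω + PC ω) / 2) * D ω := by
  rw [mul_sum, mul_sum, ← sum_sub_distrib, ← sum_sub_distrib]
  exact sum_congr rfl fun ω _ => by ring

theorem stmt_9_general {Ω : Type*} [Fintype Ω]
    (P : Ω → ℝ) :
    ∀ PG PC : Ω → ℝ,
      (∀ ω, 0 ≤ PG ω) → (∑ ω, PG ω = 1) →
      (∀ ω, 0 ≤ PC ω) → (∑ ω, PC ω = 1) →
      (0 ≤ sSup {v : ℝ | ∃ D : Ω → ℝ, (∀ ω, |D ω| ≤ 1) ∧
          v = (∑ ω, P ω * D ω) - (1/2) * (∑ ω, PG ω * D ω)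
                - (1/2) * (∑ ω, PC ω * D ω)}) ∧
      (sSup {v : ℝ | ∃ D : Ω → ℝ, (∀ ω, |D ω| ≤ 1) ∧
          v = (∑ ω, P ω * D ω) - (1/2) * (∑ ω, PG ω * D ω)
                - (1/2) * (∑ ω, PC ω * D ω)} = 0 ↔
        ∀ ω, P ω = (PG ω + PC ω) / 2) := by
  intro PG PC _ _ _ _
  simp only [sum_mul_sub_half_sum_mul_sub_half_sum_mul, sSup_sum_mul_of_abs_le_one]
  refine ⟨sum_nonneg fun ω _ => abs_nonneg _, ?_⟩
  simp [sum_eq_zero_iff_of_nonneg fun ω _ => abs_nonneg (P ω - (PG ω + PC ω) / 2), sub_eq_zero]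

/-- For the GAN objective L(D) = E_P D - (1/2) E_{P_G} D - (1/2) E_{P_C} D over
discriminators D : Ω → [-1,1], the value max_D L(D) is always nonnegative, and it
equals 0 (its minimum over pairs (P_G, P_C)) exactly when P = (P_G + P_C)/2. -/
theorem stmt_9 {Ω : Type*} [Fintype Ω]
    (P : Ω → ℝ) (hP : ∀ ω, 0 ≤ P ω) (hPsum : ∑ ω, P ω = 1) :
    ∀ PG PC : Ω → ℝ,
      (∀ ω, 0 ≤ PG ω) → (∑ ω, PG ω = 1) →
      (∀ ω, 0 ≤ PC ω) → (∑ ω, PC ω = 1) →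
      (0 ≤ sSup {v : ℝ | ∃ D : Ω → ℝ, (∀ ω, |D ω| ≤ 1) ∧
          v = (∑ ω, P ω * D ω) - (1/2) * (∑ ω, PG ω * D ω)
                - (1/2) * (∑ ω, PC ω * D ω)}) ∧
      (sSup {v : ℝ | ∃ D : Ω → ℝ, (∀ ω, |D ω| ≤ 1) ∧
          v = (∑ ω, P ω * D ω) - (1/2) * (∑ ω, PG ω * D ω)
                - (1/2) * (∑ ω, PC ω * D ω)} = 0 ↔
        ∀ ω, P ω = (PG ω + PC ω) / 2) :=
  stmt_9_general P
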